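/- arXiv:1608.00171 — 9 statements merged into one kernel-verified Lean document; each statement's English description precedes it below -/
import Mathlib

section
/- Let R be a commutative ring with total quotient ring T(R). The canonical ring homomorphism R[ε] → T(R)[ε] induced by the localization map R → T(R) exhibits T(R)[ε] as the total quotient ring of R[ε]; that is, T(R)[ε] is the localization of R[ε] at the multiplicative set of non-zerodivisors of R[ε] (the map is injective, sends every non-zerodivisor of R[ε] to a unit, and every element of T(R)[ε] is a quotient of an element of R[ε] by a non-zerodivisor of R[ε]). -/
/-!
A dual number `a + bε` is a non-zerodivisor exactly when `a` is, and it becomes a unit in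
`T(R)[ε]` exactly when `a` does; so non-zerodivisors go to units, and any `x + yε` over
`T(R)` is reached by bringing `x` and `y` to a common denominator `s`, i.e. multiplying by
the non-zerodivisor `inl s`.
-/

open TrivSqZeroExt

namespace DualNumber

section Map

variable {R S : Type*} [CommSemiring R] [CommSemiring S]

def mapRingHom (f : R →+* S) : DualNumber R →+* DualNumber S where
  toFun z := inl (f z.fst) + inr (f z.snd)
  map_one' := by ext <;> simp
  map_mul' x y := by ext <;> simp
  map_zero' := by ext <;> simp
  map_add' x y := by ext <;> simp

@[simp]
theorem fst_mapRingHom (f : R →+* S) (z : DualNumber R) : (mapRingHom f z).fst = f z.fst := by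
  simp [mapRingHom]

@[simp]
theorem snd_mapRingHom (f : R →+* S) (z : DualNumber R) : (mapRingHom f z).snd = f z.snd := by
  simp [mapRingHom]

theorem mapRingHom_inl_add_inr (f : R →+* S) (x y : R) :
    mapRingHom f (inl x + inr y) = inl (f x) + inr (f y) := by
  ext <;> simp only [fst_mapRingHom, snd_mapRingHom, fst_add, snd_add, fst_inl, fst_inr, snd_inl,
    snd_inr, add_zero, zero_add]

theorem mapRingHom_injective {f : R →+* S} (hf : Function.Injective f) :
    Function.Injective (mapRingHom f) := fun x y hxy =>
  TrivSqZeroExt.ext (hf <| by simpa using congr_arg fst hxy)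
    (hf <| by simpa using congr_arg snd hxy)

end Map

theorem mem_nonZeroDivisors_iff_fst_mem {R : Type*} [CommSemiring R] {z : DualNumber R} :
    z ∈ nonZeroDivisors (DualNumber R) ↔ z.fst ∈ nonZeroDivisors R := by
  simp only [mem_nonZeroDivisors_iff_right]
  constructor
  · intro hz c hc
    -- `z * (c ε) = (z.fst * c) ε`
    have := hz (inr c) (by ext <;> simp [hc])
    simpa using congr_arg snd this
  · intro hz w hw
    have hw₁ : w.fst = 0 := hz _ (by simpa [mul_comm] using congr_arg fst hw)
    have hw₂ : w.snd = 0 :=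
      hz _ (by simpa [DualNumber.snd_mul, hw₁, mul_comm] using congr_arg snd hw)
    exact TrivSqZeroExt.ext hw₁ hw₂

theorem isUnit_mapRingHom_algebraMap {R S : Type*} [CommRing R] [CommRing S] [Algebra R S]
    {M : Submonoid R} [IsLocalization M S] {z : DualNumber R} (hz : z.fst ∈ M) :
    IsUnit (mapRingHom (algebraMap R S) z) := by
  rw [isUnit_iff_isUnit_fst, fst_mapRingHom]
  exact IsLocalization.map_units S ⟨_, hz⟩

theorem exists_mul_mapRingHom_inl_eq {R S : Type*} [CommSemiring R] [CommSemiring S] [Algebra R S]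
    (M : Submonoid R) [IsLocalization M S] (w : DualNumber S) :
    ∃ z : DualNumber R, ∃ s ∈ M,
      w * mapRingHom (algebraMap R S) (inl s) = mapRingHom (algebraMap R S) z := by
  obtain ⟨x, y, s, hx, hy⟩ := IsLocalization.surj₂ M S w.fst w.snd
  refine ⟨inl x + inr y, s, s.2, ?_⟩
  ext <;> simp [hx, hy]

end DualNumber

/-- The total quotient ring of the ring of dual numbers `R[ε]` is
`T(R)[ε]`: the canonical ring homomorphism `R[ε] → T(R)[ε]` (induced coordinatewise by
the localization map `R → T(R)`) is injective, sends every non-zerodivisor of `R[ε]` to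
a unit, and every element of `T(R)[ε]` can be written as a quotient of an element of
`R[ε]` by a non-zerodivisor of `R[ε]`. -/
theorem dualNumber_totalQuotientRing (R : Type*) [CommRing R] :
    ∃ φ : DualNumber R →+* DualNumber (FractionRing R),
      (∀ x y : R,
        φ (inl x + inr y) =
          inl (algebraMap R (FractionRing R) x) + inr (algebraMap R (FractionRing R) y)) ∧
      Function.Injective φ ∧
      (∀ z ∈ nonZeroDivisors (DualNumber R), IsUnit (φ z)) ∧
      (∀ w : DualNumber (FractionRing R),
        ∃ z : DualNumber R, ∃ u ∈ nonZeroDivisors (DualNumber R), w * φ u = φ z) := by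
  refine ⟨DualNumber.mapRingHom (algebraMap R (FractionRing R)),
    DualNumber.mapRingHom_inl_add_inr _,
    DualNumber.mapRingHom_injective (IsFractionRing.injective R (FractionRing R)),
    fun z hz => DualNumber.isUnit_mapRingHom_algebraMap
      (DualNumber.mem_nonZeroDivisors_iff_fst_mem.mp hz), fun w => ?_⟩
  obtain ⟨z, s, hs, hw⟩ := DualNumber.exists_mul_mapRingHom_inl_eq (nonZeroDivisors R) w
  exact ⟨z, inl s, DualNumber.mem_nonZeroDivisors_iff_fst_mem.mpr hs, hw⟩
end

section
/- Let R be a commutative ring with total quotient ring K = T(R), and identify R with its image in K. For all f, g ∈ K[X], the polynomial F = f̄ + ḡ·ε ∈ K[ε][X] (where f̄, ḡ are the coefficientwise inclusions of f, g into K[ε][X]) satisfies F(z) ∈ R[ε] for every z ∈ R[ε] if and only if f ∈ Int(R), f′ ∈ Int(R), and g ∈ Int(R). In other words, Int(R[ε]) = Int^(1)(R) + Int(R)·ε. -/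
/-!
Since `ε² = 0`, Taylor expansion gives `F(x + yε) = f(x) + (y f′(x) + g(x)) ε`. The constant part
lies in `R` for all `x` iff `f ∈ Int(R)`; the `ε`-part lies in `R` for all `y` iff both `g(x)`
(take `y = 0`) and `f′(x)` (then take `y = 1`) do.
-/

open Polynomial TrivSqZeroExt

/-- The set `Int(R)` of integer-valued polynomials on `R`: polynomials with coefficients
in the total quotient ring `K = T(R)` (realized as `FractionRing R`) mapping (the image
of) `R` into (the image of) `R`. -/
def IntPoly (R : Type*) [CommRing R] : Set (Polynomial (FractionRing R)) :=
  {f | ∀ r : R, f.eval (algebraMap R (FractionRing R) r) ∈ Set.range (algebraMap R (FractionRing R))}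

/-- Membership in the subring `R[ε]` of `K[ε]`, `K = T(R)`: both components lie in the
image of `R`. -/
def MemDualR (R : Type*) [CommRing R] (z : DualNumber (FractionRing R)) : Prop :=
  z.fst ∈ Set.range (algebraMap R (FractionRing R)) ∧
    z.snd ∈ Set.range (algebraMap R (FractionRing R))

lemma eval_map_inlHom_add_mul_eps {K : Type*} [CommRing K] (f g : K[X]) (a b : K) :
    (f.map (inlHom K K) + g.map (inlHom K K) * C DualNumber.eps).eval (inl a + inr b) =
      inl (f.eval a) + inr (b * (derivative f).eval a + g.eval a) := by
  have hb : (inr b : DualNumber K) ^ 2 = 0 := by rw [sq, inr_mul_inr]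
  simp only [eval_add, eval_mul, eval_C, ← algebraMap_eq_inlHom, eval_map_algebraMap,
    aeval_add_of_sq_eq_zero _ _ _ hb, ← algebraMap_eq_inl, aeval_algebraMap_apply]
  rw [algebraMap_eq_inl]
  ext
  · simp only [fst_add, fst_mul, fst_inl, fst_inr, DualNumber.fst_eps, coe_aeval_eq_eval]
    ring
  · simp only [snd_add, snd_mul, fst_add, fst_mul, fst_inl, fst_inr, snd_inl, snd_inr,
      DualNumber.snd_eps, DualNumber.fst_eps, coe_aeval_eq_eval, smul_eq_mul, op_smul_eq_smul]
    ring

lemma RingHom.forall_mul_add_mem_range_iff {R A : Type*} [Ring R] [Ring A] (φ : R →+* A)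
    (u v : A) : (∀ y, φ y * u + v ∈ Set.range φ) ↔ u ∈ Set.range φ ∧ v ∈ Set.range φ := by
  simp only [← RingHom.coe_range, SetLike.mem_coe]
  refine ⟨fun h => ⟨?_, by simpa using h 0⟩, fun ⟨hu, hv⟩ y => ?_⟩
  · simpa using sub_mem (h 1) (by simpa using h 0 : v ∈ φ.range)
  · exact add_mem (mul_mem (RingHom.mem_range_self φ y) hu) hv

/-- For `f, g ∈ K[X]` (where `K = T(R)`), the polynomial
`F = f̄ + ḡ·ε ∈ K[ε][X]` maps `R[ε]` into `R[ε]` if and only if `f ∈ Int(R)`,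
`f′ ∈ Int(R)` and `g ∈ Int(R)`.  That is, `Int(R[ε]) = Int⁽¹⁾(R) + Int(R)·ε`. -/
theorem intPoly_dualNumber (R : Type*) [CommRing R] (f g : Polynomial (FractionRing R)) :
    (∀ x y : R,
        MemDualR R
          ((f.map (inlHom (FractionRing R) (FractionRing R))
              + g.map (inlHom (FractionRing R) (FractionRing R)) * C DualNumber.eps).eval
            (inl (algebraMap R (FractionRing R) x) + inr (algebraMap R (FractionRing R) y))))
      ↔ f ∈ IntPoly R ∧ derivative f ∈ IntPoly R ∧ g ∈ IntPoly R := by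
  simp only [MemDualR, eval_map_inlHom_add_mul_eps, fst_add, snd_add, fst_inl, fst_inr, snd_inl,
    snd_inr, add_zero, zero_add, forall_and, forall_const, RingHom.forall_mul_add_mem_range_iff,
    IntPoly, Set.mem_ofPred_eq]
end

section
/- Let R be a commutative ring with total quotient ring K = T(R), and let k be a nonnegative integer. For all f, g ∈ K[X], writing F = f̄ + ḡ·ε ∈ K[ε][X]: (1) the j-th formal derivative F^(j) satisfies F^(j)(x) ∈ R[ε] for all x ∈ R and all 0 ≤ j ≤ k if and only if f, g ∈ Int^(k)(R); and (2) F^(j)(z) ∈ R[ε] for all z ∈ R[ε] and all 0 ≤ j ≤ k if and only if f ∈ Int^(k+1)(R) and g ∈ Int^(k)(R). That is, Int^(k)(R, R[ε]) = Int^(k)(R)[ε] and Int^(k)(R[ε]) = Int^(k+1)(R) + Int^(k)(R)·ε. -/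
open Polynomial TrivSqZeroExt

section Aux

variable {K : Type*} [CommRing K]

lemma eval_map_inl' (p : K[X]) (x : K) :
    (p.map (inlHom K K)).eval (inl x) = inl (p.eval x) := by
  rw [eval_map]
  exact eval₂_at_apply (inlHom K K) x

lemma eval_map_inl_add_inr' (p : K[X]) (x y : K) :
    (p.map (inlHom K K)).eval (inl x + inr y)
      = inl (p.eval x) + inr (y * (derivative p).eval x) := by
  induction p using Polynomial.induction_on with
  | C a =>
      refine TrivSqZeroExt.ext ?_ ?_ <;> simp
  | add p q hp hq =>
      refine TrivSqZeroExt.ext ?_ ?_ <;>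
        simp only [Polynomial.map_add, eval_add, hp, hq, derivative_add, fst_add, snd_add,
          fst_inl, snd_inl, fst_inr, snd_inr, add_zero, zero_add] <;> ring
  | monomial n a h =>
      have e1 : (C a * X ^ (n + 1) : K[X]) = C a * X ^ n * X := by ring
      rw [e1, Polynomial.map_mul, Polynomial.map_X, eval_mul, eval_X, h]
      conv_rhs => rw [derivative_mul, derivative_X, mul_one]
      refine TrivSqZeroExt.ext ?_ ?_
      · simp only [fst_mul, fst_add, fst_inl, fst_inr, add_zero, eval_add, eval_mul, eval_X]
      · simp only [DualNumber.snd_mul, fst_add, snd_add, fst_inl, snd_inl, fst_inr, snd_inr,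
          add_zero, zero_add, eval_add, eval_mul, eval_X]
        ring

lemma inl_mul_eps' (a : K) : (inl a : DualNumber K) * DualNumber.eps = inr a := by
  show (inl a : DualNumber K) * inr 1 = inr a
  rw [inl_mul_inr, smul_eq_mul, mul_one]

lemma iterate_derivative_F (f g : K[X]) (j : ℕ) :
    derivative^[j] (f.map (inlHom K K) + g.map (inlHom K K) * C DualNumber.eps)
      = (derivative^[j] f).map (inlHom K K)
        + (derivative^[j] g).map (inlHom K K) * C DualNumber.eps := by
  induction j with
  | zero => simp
  | succ j ih =>
      rw [Function.iterate_succ_apply', ih, derivative_add, derivative_mul, derivative_C,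
        mul_zero, add_zero, derivative_map, derivative_map,
        Function.iterate_succ_apply', Function.iterate_succ_apply']

lemma eval_F_inl (f g : K[X]) (j : ℕ) (x : K) :
    (derivative^[j] (f.map (inlHom K K) + g.map (inlHom K K) * C DualNumber.eps)).eval (inl x)
      = inl ((derivative^[j] f).eval x) + inr ((derivative^[j] g).eval x) := by
  rw [iterate_derivative_F, eval_add, eval_mul, eval_C, eval_map_inl', eval_map_inl',
    inl_mul_eps']

lemma eval_F_inl_add_inr (f g : K[X]) (j : ℕ) (x y : K) :
    (derivative^[j] (f.map (inlHom K K) + g.map (inlHom K K) * C DualNumber.eps)).eval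
        (inl x + inr y)
      = inl ((derivative^[j] f).eval x)
        + inr (y * (derivative^[j + 1] f).eval x + (derivative^[j] g).eval x) := by
  rw [iterate_derivative_F, eval_add, eval_mul, eval_C, eval_map_inl_add_inr',
    eval_map_inl_add_inr']
  have : derivative (derivative^[j] f) = derivative^[j + 1] f :=
    (Function.iterate_succ_apply' derivative j f).symm
  rw [this, add_mul, inl_mul_eps']
  have h0 : (inr (y * (derivative (derivative^[j + 1] g)).eval x) : DualNumber K)
      * DualNumber.eps = 0 := inr_mul_inr _ _ _
  refine TrivSqZeroExt.ext ?_ ?_ <;>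
    simp [DualNumber.snd_mul] <;> ring

end Aux

/-- `Int⁽ᵏ⁾(R)`: integer-valued polynomials all of whose formal derivatives up to order `k`
are integer-valued. -/
def IntPolyDeriv (R : Type*) [CommRing R] (k : ℕ) : Set (Polynomial (FractionRing R)) :=
  {f | ∀ j ≤ k, derivative^[j] f ∈ IntPoly R}

/-- For `f, g ∈ K[X]` (`K = T(R)`) and `F = f̄ + ḡ·ε ∈ K[ε][X]`:
(1) `F⁽ʲ⁾(x) ∈ R[ε]` for all `x ∈ R` and `0 ≤ j ≤ k` iff `f, g ∈ Int⁽ᵏ⁾(R)`, i.e.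
`Int⁽ᵏ⁾(R, R[ε]) = Int⁽ᵏ⁾(R)[ε]`; and
(2) `F⁽ʲ⁾(z) ∈ R[ε]` for all `z ∈ R[ε]` and `0 ≤ j ≤ k` iff `f ∈ Int⁽ᵏ⁺¹⁾(R)` and
`g ∈ Int⁽ᵏ⁾(R)`, i.e. `Int⁽ᵏ⁾(R[ε]) = Int⁽ᵏ⁺¹⁾(R) + Int⁽ᵏ⁾(R)·ε`. -/
theorem intPolyDeriv_dualNumber (R : Type*) [CommRing R] (k : ℕ)
    (f g : Polynomial (FractionRing R)) :
    ((∀ j ≤ k, ∀ x : R,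
        MemDualR R
          ((derivative^[j] (f.map (inlHom (FractionRing R) (FractionRing R))
              + g.map (inlHom (FractionRing R) (FractionRing R)) * C DualNumber.eps)).eval
            (inl (algebraMap R (FractionRing R) x))))
      ↔ f ∈ IntPolyDeriv R k ∧ g ∈ IntPolyDeriv R k) ∧
    ((∀ j ≤ k, ∀ x y : R,
        MemDualR R
          ((derivative^[j] (f.map (inlHom (FractionRing R) (FractionRing R))
              + g.map (inlHom (FractionRing R) (FractionRing R)) * C DualNumber.eps)).eval
            (inl (algebraMap R (FractionRing R) x) + inr (algebraMap R (FractionRing R) y))))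
      ↔ f ∈ IntPolyDeriv R (k + 1) ∧ g ∈ IntPolyDeriv R k) := by
  set K := FractionRing R
  set φ := algebraMap R K with hφ
  have hsub : ∀ a b : K, a + b ∈ Set.range φ → b ∈ Set.range φ → a ∈ Set.range φ := by
    rintro a b ⟨u, hu⟩ ⟨v, hv⟩
    exact ⟨u - v, by rw [map_sub, hu, hv]; ring⟩
  constructor
  · constructor
    · intro H
      refine ⟨fun j hj r => ?_, fun j hj r => ?_⟩
      · have := (H j hj r).1
        rwa [eval_F_inl, fst_add, fst_inl, fst_inr, add_zero] at this
      · have := (H j hj r).2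
        rwa [eval_F_inl, snd_add, snd_inl, snd_inr, zero_add] at this
    · rintro ⟨hf, hg⟩ j hj x
      constructor
      · rw [eval_F_inl, fst_add, fst_inl, fst_inr, add_zero]
        exact hf j hj x
      · rw [eval_F_inl, snd_add, snd_inl, snd_inr, zero_add]
        exact hg j hj x
  · constructor
    · intro H
      have hg : g ∈ IntPolyDeriv R k := by
        intro j hj x
        have := (H j hj x 0).2
        rwa [eval_F_inl_add_inr, snd_add, snd_inl, snd_inr, zero_add, map_zero, zero_mul,
          zero_add] at this
      have hf' : ∀ j ≤ k, ∀ x : R, (derivative^[j + 1] f).eval (φ x) ∈ Set.range φ := by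
        intro j hj x
        have h1 := (H j hj x 1).2
        rw [eval_F_inl_add_inr, snd_add, snd_inl, snd_inr, zero_add, map_one, one_mul] at h1
        exact hsub _ _ h1 (hg j hj x)
      refine ⟨fun j hj x => ?_, hg⟩
      rcases Nat.lt_or_ge j (k + 1) with h | h
      · have := (H j (Nat.lt_succ_iff.mp h) x 0).1
        rwa [eval_F_inl_add_inr, fst_add, fst_inl, fst_inr, add_zero] at this
      · have hjk : j = k + 1 := le_antisymm hj h
        subst hjk
        exact hf' k le_rfl x
    · rintro ⟨hf, hg⟩ j hj x y
      constructor
      · rw [eval_F_inl_add_inr, fst_add, fst_inl, fst_inr, add_zero]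
        exact hf j (le_trans hj (Nat.le_succ k)) x
      · rw [eval_F_inl_add_inr, snd_add, snd_inl, snd_inr, zero_add]
        obtain ⟨a, ha⟩ := hf (j + 1) (Nat.succ_le_succ hj) x
        obtain ⟨b, hb⟩ := hg j hj x
        exact ⟨y * a + b, by rw [map_add, map_mul, ha, hb]⟩
end

section
/- Let R be a commutative ring with total quotient ring K = T(R), and let n be a positive integer. Let A_K = K[ε₁,…,εₙ] = K[T₁,…,Tₙ]/(T₁²,…,Tₙ²) with εᵢ the image of Tᵢ, and let A_R be the image of R[T₁,…,Tₙ] in A_K. Then a polynomial F ∈ A_K[X] satisfies F(a) ∈ A_R for all a ∈ A_R if and only if F(x + Σᵢ eᵢεᵢ) ∈ A_R for all x ∈ R and all choices e₁,…,eₙ ∈ {0,1}. That is, the subset R + Σᵢ{0,1}εᵢ is polynomially dense in R[ε₁,…,εₙ]. -/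
open Polynomial

/-- The ring of `n`-hyper-dual numbers `K[ε₁,…,εₙ] = K[T₁,…,Tₙ]/(T₁²,…,Tₙ²)`. -/
abbrev HyperDual (K : Type*) [CommRing K] (n : ℕ) : Type _ :=
  MvPolynomial (Fin n) K ⧸
    Ideal.span (Set.range fun i : Fin n => (MvPolynomial.X i : MvPolynomial (Fin n) K) ^ 2)

/-- The image `εᵢ` of `Tᵢ` in `K[ε₁,…,εₙ]`. -/
noncomputable def HyperDual.eps (K : Type*) [CommRing K] (n : ℕ) (i : Fin n) :
    HyperDual K n :=
  Ideal.Quotient.mk _ (MvPolynomial.X i)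

/-- The coefficientwise inclusion `K → K[ε₁,…,εₙ]`. -/
noncomputable def HyperDual.C (K : Type*) [CommRing K] (n : ℕ) : K →+* HyperDual K n :=
  (Ideal.Quotient.mk _).comp MvPolynomial.C

/-- The subring `A_R = R[ε₁,…,εₙ]` of `K[ε₁,…,εₙ]`: the image of `R[T₁,…,Tₙ]`. -/
noncomputable def HyperDual.baseRange (R : Type*) [CommRing R] (n : ℕ) :
    Subring (HyperDual (FractionRing R) n) :=
  ((Ideal.Quotient.mk _ : MvPolynomial (Fin n) (FractionRing R) →+* HyperDual (FractionRing R) n).comp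
    (MvPolynomial.map (algebraMap R (FractionRing R)))).range

/-!
Write `a ∈ R[ε]` as `x + η` with `x ∈ R` and `η` in the `R`-span of the nonempty squarefree
monomials `ε_T = ∏ i ∈ T, εᵢ`. As every `εᵢ` squares to zero, `η` has divided powers:
`η ^ k = k! z` with `z` in the span of the `ε_T` with `#T ≥ k`, so Taylor expansion at `x` writes
`F(x + η)` as a sum of terms `F⁽ᵏ⁾(x) z`. On the other hand
`F(x + Σ_{i ∈ T} εᵢ) = Σ_{U ⊆ T} F⁽#U⁾(x) ε_U`, so induction on `T` turns the hypothesis into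
`F⁽#T⁾(x) ε_T ∈ R[ε]` for every `T`, which covers all those terms.
-/

open scoped Nat

section SquareZero

variable {A ι : Type*} [CommRing A] {ε : ι → A}

theorem factorial_mul_taylor_coeff (F : A[X]) (b : A) (k : ℕ) :
    (k ! : A) * (taylor b F).coeff k = (derivative^[k] F).eval b := by
  rw [taylor_coeff, ← factorial_smul_hasseDeriv, LinearMap.smul_apply, eval_smul, nsmul_eq_mul]

theorem prod_mul_prod_eq_zero_of_not_disjoint (hε : ∀ i, ε i * ε i = 0) {T U : Finset ι}
    (h : ¬Disjoint T U) : (∏ i ∈ T, ε i) * ∏ i ∈ U, ε i = 0 := by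
  classical
  obtain ⟨i, hiT, hiU⟩ := Finset.not_disjoint_iff.mp h
  rw [← Finset.mul_prod_erase _ _ hiT, ← Finset.mul_prod_erase _ _ hiU, mul_mul_mul_comm, hε,
    zero_mul]

theorem eval_add_sum_of_mul_self_eq_zero (hε : ∀ i, ε i * ε i = 0) (F : A[X]) (b : A)
    (T : Finset ι) :
    F.eval (b + ∑ i ∈ T, ε i) =
      ∑ U ∈ T.powerset, (derivative^[U.card] F).eval b * ∏ i ∈ U, ε i := by
  classical
  induction T using Finset.induction_on generalizing F with
  | empty => simp
  | insert a T ha ih =>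
    have hT : ∀ U ∈ T.powerset, a ∉ U := fun U hU haU => ha (Finset.mem_powerset.mp hU haU)
    rw [Finset.sum_insert ha, add_left_comm, add_comm,
      eval_add_of_sq_eq_zero _ _ _ (by rw [sq, hε]), ih, ih,
      Finset.sum_powerset_insert ha, Finset.sum_mul]
    congr 1
    refine Finset.sum_congr rfl fun U hU => ?_
    rw [Finset.card_insert_of_notMem (hT U hU), Function.iterate_succ_apply,
      Finset.prod_insert (hT U hU)]
    ring

theorem iterate_derivative_eval_mul_prod_mem {S : Type*} [SetLike S A] [AddSubgroupClass S A]
    {s : S} (hε : ∀ i, ε i * ε i = 0) {F : A[X]} {b : A}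
    (hF : ∀ T : Finset ι, F.eval (b + ∑ i ∈ T, ε i) ∈ s) (T : Finset ι) :
    (derivative^[T.card] F).eval b * ∏ i ∈ T, ε i ∈ s := by
  classical
  induction T using Finset.strongInduction with
  | H T ih =>
    have hT := hF T
    rw [eval_add_sum_of_mul_self_eq_zero hε,
      ← Finset.add_sum_erase _ _ (Finset.mem_powerset_self T)] at hT
    have hsub : ∑ U ∈ T.powerset.erase T, (derivative^[U.card] F).eval b * ∏ i ∈ U, ε i ∈ s :=
      sum_mem fun U hU => ih U <| Finset.ssubset_iff_subset_ne.mpr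
        ⟨Finset.mem_powerset.mp (Finset.mem_of_mem_erase hU), Finset.ne_of_mem_erase hU⟩
    simpa using sub_mem hT hsub

end SquareZero

section SquarefreeSpan

variable (R : Type*) {A ι : Type*} [CommRing R] [CommRing A] [Algebra R A] (ε : ι → A)

def squarefreeSpan (k : ℕ) : Submodule R A :=
  Submodule.span R ((fun T : Finset ι => ∏ i ∈ T, ε i) '' {T | k ≤ T.card})

variable {R ε}

theorem prod_mem_squarefreeSpan {k : ℕ} {T : Finset ι} (hT : k ≤ T.card) :
    ∏ i ∈ T, ε i ∈ squarefreeSpan R ε k :=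
  Submodule.subset_span ⟨T, hT, rfl⟩

theorem squarefreeSpan_antitone : Antitone (squarefreeSpan R ε) := fun _ _ hkl =>
  Submodule.span_mono (Set.image_mono fun _ hT => le_trans hkl hT)

theorem squarefreeSpan_mul_le (hε : ∀ i, ε i * ε i = 0) (j l : ℕ) :
    squarefreeSpan R ε j * squarefreeSpan R ε l ≤ squarefreeSpan R ε (j + l) := by
  classical
  rw [squarefreeSpan, squarefreeSpan, Submodule.span_mul_span, Submodule.span_le]
  rintro _ ⟨_, ⟨T, hT, rfl⟩, _, ⟨U, hU, rfl⟩, rfl⟩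
  change (∏ i ∈ T, ε i) * ∏ i ∈ U, ε i ∈ squarefreeSpan R ε (j + l)
  by_cases hTU : Disjoint T U
  · rw [← Finset.prod_union hTU]
    refine prod_mem_squarefreeSpan ?_
    rw [Finset.card_union_of_disjoint hTU]
    exact add_le_add hT hU
  · rw [prod_mul_prod_eq_zero_of_not_disjoint hε hTU]
    exact zero_mem _

theorem exists_sub_algebraMap_mem_squarefreeSpan (hε : ∀ i, ε i * ε i = 0) {a : A}
    (ha : a ∈ Algebra.adjoin R (Set.range ε)) :
    ∃ x : R, a - algebraMap R A x ∈ squarefreeSpan R ε 1 := by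
  induction ha using Algebra.adjoin_induction with
  | mem _ hi =>
    obtain ⟨i, rfl⟩ := hi
    refine ⟨0, ?_⟩
    simpa using prod_mem_squarefreeSpan (ε := ε) (R := R) (T := {i}) le_rfl
  | algebraMap x => exact ⟨x, by simp⟩
  | add a b _ _ ha hb =>
    obtain ⟨x, hx⟩ := ha
    obtain ⟨y, hy⟩ := hb
    exact ⟨x + y, by simpa [map_add, add_sub_add_comm] using add_mem hx hy⟩
  | mul a b _ _ ha hb =>
    obtain ⟨x, hx⟩ := ha
    obtain ⟨y, hy⟩ := hb
    refine ⟨x * y, ?_⟩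
    have hprod := squarefreeSpan_antitone (by norm_num : 1 ≤ 1 + 1)
      (squarefreeSpan_mul_le hε 1 1 (Submodule.mul_mem_mul hx hy))
    have hdecomp : a * b - algebraMap R A (x * y) = (a - algebraMap R A x) * (b - algebraMap R A y)
        + x • (b - algebraMap R A y) + y • (a - algebraMap R A x) := by
      simp only [map_mul, Algebra.smul_def]
      ring
    rw [hdecomp]
    exact add_mem (add_mem hprod (Submodule.smul_mem _ x hy)) (Submodule.smul_mem _ y hx)

theorem exists_pow_eq_factorial_mul (hε : ∀ i, ε i * ε i = 0) {η : A}
    (hη : η ∈ squarefreeSpan R ε 1) (k : ℕ) :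
    ∃ z ∈ squarefreeSpan R ε k, η ^ k = k ! * z := by
  have one_mem : (1 : A) ∈ squarefreeSpan R ε 0 := by
    simpa using prod_mem_squarefreeSpan (R := R) (ε := ε) (T := ∅) le_rfl
  induction hη using Submodule.span_induction generalizing k with
  | mem _ hx =>
    obtain ⟨T, hT, rfl⟩ := hx
    have hsq : (∏ i ∈ T, ε i) * ∏ i ∈ T, ε i = 0 :=
      prod_mul_prod_eq_zero_of_not_disjoint hε fun h => by simp_all
    match k with
    | 0 => exact ⟨1, one_mem, by simp⟩
    | 1 => exact ⟨_, prod_mem_squarefreeSpan hT, by simp⟩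
    | k + 2 => exact ⟨0, zero_mem _, by rw [pow_add, sq, hsq]; simp⟩
  | zero =>
    match k with
    | 0 => exact ⟨1, one_mem, by simp⟩
    | k + 1 => exact ⟨0, zero_mem _, by simp⟩
  | add x y _ _ hx hy =>
    choose zx hzx hx using hx
    choose zy hzy hy using hy
    refine ⟨∑ m ∈ Finset.range (k + 1), zx m * zy (k - m), Submodule.sum_mem _ fun m hm => ?_, ?_⟩
    · have hmk : m + (k - m) = k := Nat.add_sub_cancel' (Finset.mem_range_succ_iff.mp hm)
      simpa only [hmk] using
        squarefreeSpan_mul_le hε m (k - m) (Submodule.mul_mem_mul (hzx m) (hzy (k - m)))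
    · rw [add_pow, Finset.mul_sum]
      refine Finset.sum_congr rfl fun m hm => ?_
      rw [hx, hy, ← Nat.choose_mul_factorial_mul_factorial (Finset.mem_range_succ_iff.mp hm)]
      push_cast
      ring
  | smul r x _ hx =>
    obtain ⟨z, hz, hxz⟩ := hx k
    exact ⟨r ^ k • z, Submodule.smul_mem _ _ hz, by rw [_root_.smul_pow, hxz, mul_smul_comm]⟩

theorem mul_mem_adjoin_of_mem_squarefreeSpan {g z : A} {k : ℕ}
    (hg : ∀ T : Finset ι, T.card = k → g * ∏ i ∈ T, ε i ∈ Algebra.adjoin R (Set.range ε))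
    (hz : z ∈ squarefreeSpan R ε k) : g * z ∈ Algebra.adjoin R (Set.range ε) := by
  classical
  induction hz using Submodule.span_induction with
  | mem _ hx =>
    obtain ⟨T, hT, rfl⟩ := hx
    obtain ⟨U, hUT, hU⟩ := Finset.exists_subset_card_eq hT
    change g * ∏ i ∈ T, ε i ∈ _
    rw [← Finset.prod_sdiff hUT, mul_left_comm]
    exact mul_mem (Subalgebra.prod_mem _ fun i _ => Algebra.subset_adjoin ⟨i, rfl⟩) (hg U hU)
  | zero => simp
  | add x y _ _ hx hy => rw [mul_add]; exact add_mem hx hy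
  | smul r x _ hx => rw [mul_smul_comm]; exact Subalgebra.smul_mem _ hx r

theorem eval_mem_adjoin_of_forall_eval_add_sum_mem (hε : ∀ i, ε i * ε i = 0) {F : A[X]}
    (hF : ∀ (x : R) (T : Finset ι),
      F.eval (algebraMap R A x + ∑ i ∈ T, ε i) ∈ Algebra.adjoin R (Set.range ε))
    {a : A} (ha : a ∈ Algebra.adjoin R (Set.range ε)) :
    F.eval a ∈ Algebra.adjoin R (Set.range ε) := by
  obtain ⟨x, hη⟩ := exists_sub_algebraMap_mem_squarefreeSpan hε ha
  rw [← sub_add_cancel a (algebraMap R A x), ← taylor_eval, eval_eq_sum, Polynomial.sum]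
  refine Subalgebra.sum_mem _ fun k _ => ?_
  obtain ⟨z, hz, hηz⟩ := exists_pow_eq_factorial_mul hε hη k
  rw [hηz, mul_left_comm, ← mul_assoc, factorial_mul_taylor_coeff]
  refine mul_mem_adjoin_of_mem_squarefreeSpan (fun T hT => ?_) hz
  simpa only [hT] using iterate_derivative_eval_mul_prod_mem hε (hF x) T

end SquarefreeSpan

namespace HyperDual

theorem eps_mul_self (K : Type*) [CommRing K] (n : ℕ) (i : Fin n) : eps K n i * eps K n i = 0 := by
  rw [eps, ← map_mul, ← sq, Ideal.Quotient.eq_zero_iff_mem]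
  exact Ideal.subset_span ⟨i, rfl⟩

theorem C_algebraMap (R K : Type*) [CommRing R] [CommRing K] [Algebra R K] (n : ℕ) (x : R) :
    C K n (algebraMap R K x) = algebraMap R (HyperDual K n) x :=
  rfl

theorem baseRange_eq_adjoin (R : Type*) [CommRing R] (n : ℕ) :
    baseRange R n = (Algebra.adjoin R (Set.range (eps (FractionRing R) n))).toSubring := by
  have hom_eq : ((Ideal.Quotient.mk _).comp (MvPolynomial.map (algebraMap R (FractionRing R))) :
      MvPolynomial (Fin n) R →+* HyperDual (FractionRing R) n) =
      (MvPolynomial.aeval (eps (FractionRing R) n)).toRingHom :=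
    MvPolynomial.ringHom_ext (fun x => by simpa [C] using C_algebraMap R (FractionRing R) n x)
      (fun i => by simp [eps])
  rw [baseRange, hom_eq, Algebra.adjoin_range_eq_range_aeval]
  rfl

end HyperDual

theorem hyperDual_polynomially_dense_general (R : Type*) [CommRing R] (n : ℕ)
    (F : Polynomial (HyperDual (FractionRing R) n)) :
    (∀ a ∈ HyperDual.baseRange R n, F.eval a ∈ HyperDual.baseRange R n)
      ↔ ∀ (x : R) (e : Fin n → Bool),
          F.eval (HyperDual.C (FractionRing R) n (algebraMap R (FractionRing R) x) +
              ∑ i : Fin n, if e i then HyperDual.eps (FractionRing R) n i else 0)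
            ∈ HyperDual.baseRange R n := by
  simp only [HyperDual.baseRange_eq_adjoin, Subalgebra.mem_toSubring, HyperDual.C_algebraMap]
  refine ⟨fun hF x e => hF _ (add_mem (Subalgebra.algebraMap_mem _ x) (sum_mem fun i _ => ?_)),
    fun hF a ha => eval_mem_adjoin_of_forall_eval_add_sum_mem (HyperDual.eps_mul_self _ n)
      (fun x T => ?_) ha⟩
  · split
    · exact Algebra.subset_adjoin ⟨i, rfl⟩
    · exact zero_mem _
  · simpa [Finset.sum_ite_mem] using hF x (fun i => decide (i ∈ T))

/-- A polynomial `F` over `K[ε₁,…,εₙ]` (`K = T(R)`) maps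
`A_R = R[ε₁,…,εₙ]` into itself iff `F(x + Σᵢ eᵢεᵢ) ∈ A_R` for all `x ∈ R` and all
`e₁, …, eₙ ∈ {0,1}`; that is, `R + Σᵢ {0,1}εᵢ` is polynomially dense in `R[ε₁,…,εₙ]`. -/
theorem hyperDual_polynomially_dense (R : Type*) [CommRing R] (n : ℕ) (hn : 0 < n)
    (F : Polynomial (HyperDual (FractionRing R) n)) :
    (∀ a ∈ HyperDual.baseRange R n, F.eval a ∈ HyperDual.baseRange R n)
      ↔ ∀ (x : R) (e : Fin n → Bool),
          F.eval (HyperDual.C (FractionRing R) n (algebraMap R (FractionRing R) x) +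
              ∑ i : Fin n, if e i then HyperDual.eps (FractionRing R) n i else 0)
            ∈ HyperDual.baseRange R n :=
  hyperDual_polynomially_dense_general R n F
end

section
/- Let R be a commutative ring, r ∈ R, and R[ρ] = R[T]/(T(T−r)) with ρ the image of T, so every element of R[ρ] is uniquely of the form x + yρ with x, y ∈ R. Then z = x + yρ is a unit of R[ρ] if and only if both x and x + ry are units of R, and z is a non-zerodivisor of R[ρ] if and only if both x and x + ry are non-zerodivisors of R. -/
/-!
Evaluation at the two roots `0` and `r` of `T(T − r)` gives ring maps `R[ρ] → R` sending
`x + yρ` to `x` and to `x + ry`, so both conditions are necessary for `x + yρ` to be a unit.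
Conversely `(x + yρ)(x + ry − yρ) = x(x + ry)`. For non-zerodivisors, `ρ` and `ρ − r` are
eigenvectors of multiplication by `x + yρ`, with eigenvalues `x + ry` and `x`.
-/

open Polynomial

/-- The ring `R[ρ] = R[T]/(T(T−r))`. -/
abbrev RhoRing (R : Type*) [CommRing R] (r : R) : Type _ :=
  Polynomial R ⧸ Ideal.span {(X * (X - Polynomial.C r) : Polynomial R)}

theorem Polynomial.degree_X_mul_X_sub_C {R : Type*} [CommRing R] [Nontrivial R] (r : R) :
    (X * (X - C r) : R[X]).degree = 2 := by
  rw [(monic_X_sub_C r).degree_mul, degree_X, degree_X_sub_C]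
  rfl

noncomputable section

namespace RhoRing

variable {R : Type*} [CommRing R] {r : R}

def mk (x y : R) : RhoRing R r := Ideal.Quotient.mk _ (C x + C y * X)

theorem mk_eq_zero_iff {x y : R} : (mk x y : RhoRing R r) = 0 ↔ x = 0 ∧ y = 0 := by
  nontriviality R
  refine ⟨fun h => ?_, by rintro ⟨rfl, rfl⟩; simp [mk]⟩
  have hdvd : X * (X - C r) ∣ C x + C y * X := by
    rwa [mk, Ideal.Quotient.eq_zero_iff_mem, Ideal.mem_span_singleton] at h
  have hzero : C y * X + C x = 0 := by
    by_contra hne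
    refine (monic_X.mul (monic_X_sub_C r)).not_dvd_of_degree_lt hne ?_ (add_comm (C x) _ ▸ hdvd)
    rw [degree_X_mul_X_sub_C]
    exact degree_linear_lt
  exact ⟨by simpa using congrArg (coeff · 0) hzero, by simpa using congrArg (coeff · 1) hzero⟩

theorem exists_mk_eq (z : RhoRing R r) : ∃ x y, mk x y = z := by
  nontriviality R
  obtain ⟨p, rfl⟩ := Ideal.Quotient.mk_surjective z
  set g : R[X] := X * (X - C r)
  have hdeg : (p %ₘ g).degree ≤ 1 := by
    have h := degree_modByMonic_lt p (monic_X.mul (monic_X_sub_C r))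
    rw [degree_X_mul_X_sub_C] at h
    exact Order.le_of_lt_succ h
  refine ⟨(p %ₘ g).coeff 0, (p %ₘ g).coeff 1, ?_⟩
  rw [mk, Ideal.Quotient.eq, Ideal.mem_span_singleton]
  exact ⟨-(p /ₘ g), by
    linear_combination modByMonic_add_div p g - eq_X_add_C_of_degree_le_one hdeg⟩

theorem mk_mul_mk (x y u v : R) :
    (mk x y : RhoRing R r) * mk u v = mk (x * u) (x * v + y * u + r * y * v) := by
  rw [mk, mk, mk, ← map_mul, Ideal.Quotient.eq, Ideal.mem_span_singleton]
  exact ⟨C (y * v), by simp only [C_add, C_mul]; ring⟩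

theorem mk_mul_mk_conj (x y : R) :
    (mk x y : RhoRing R r) * mk (x + r * y) (-y) = mk (x * (x + r * y)) 0 := by
  rw [mk_mul_mk]
  congr 1
  ring

theorem mk_mul_mk_zero (x y a : R) :
    (mk x y : RhoRing R r) * mk 0 a = mk 0 ((x + r * y) * a) := by
  rw [mk_mul_mk]
  congr 1 <;> ring

theorem mk_mul_mk_neg_mul_self (x y a : R) :
    (mk x y : RhoRing R r) * mk (-(r * a)) a = mk (-(r * (x * a))) (x * a) := by
  rw [mk_mul_mk]
  congr 1 <;> ring

def eval (a : R) (ha : a * (a - r) = 0) : RhoRing R r →+* R :=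
  Ideal.Quotient.lift _ (evalRingHom a) fun p hp => by
    obtain ⟨q, rfl⟩ := Ideal.mem_span_singleton'.1 hp
    simp [ha]

theorem eval_mk {a : R} (ha : a * (a - r) = 0) (x y : R) :
    eval a ha (mk x y) = x + y * a := by
  simp [eval, mk]

theorem isUnit_mk_iff {x y : R} :
    IsUnit (mk x y : RhoRing R r) ↔ IsUnit x ∧ IsUnit (x + r * y) := by
  refine ⟨fun h => ⟨?_, ?_⟩, fun ⟨hx, hxy⟩ => ?_⟩
  · simpa [eval_mk] using h.map (eval 0 (by simp))
  · simpa [eval_mk, mul_comm] using h.map (eval r (by simp))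
  · have hnorm : IsUnit (mk (x * (x + r * y)) 0 : RhoRing R r) := by
      simpa [mk] using (hx.mul hxy).map
        ((Ideal.Quotient.mk (Ideal.span {X * (X - C r)})).comp C)
    exact isUnit_of_mul_isUnit_left (mk_mul_mk_conj x y ▸ hnorm)

theorem mk_mem_nonZeroDivisors_iff {x y : R} :
    (mk x y : RhoRing R r) ∈ nonZeroDivisors (RhoRing R r) ↔
      x ∈ nonZeroDivisors R ∧ x + r * y ∈ nonZeroDivisors R := by
  simp only [mem_nonZeroDivisors_iff_left]
  refine ⟨fun h => ⟨fun a ha => ?_, fun a ha => ?_⟩, fun ⟨hx, hxy⟩ w hw => ?_⟩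
  · have h0 := h _ (by rw [mk_mul_mk_neg_mul_self, ha, mk_eq_zero_iff]; simp)
    exact (mk_eq_zero_iff.1 h0).2
  · have h0 := h _ (by rw [mk_mul_mk_zero, ha, mk_eq_zero_iff]; simp)
    exact (mk_eq_zero_iff.1 h0).2
  · obtain ⟨u, v, rfl⟩ := exists_mk_eq w
    obtain rfl : u = 0 := hx u (by simpa [eval_mk] using congrArg (eval 0 (by simp)) hw)
    rw [mk_mul_mk_zero, mk_eq_zero_iff] at hw
    exact mk_eq_zero_iff.2 ⟨rfl, hxy v hw.2⟩

end RhoRing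

end

/-- In `R[ρ] = R[T]/(T(T−r))`, the element `z = x + yρ` is a unit iff
both `x` and `x + ry` are units of `R`, and is a non-zerodivisor iff both `x` and
`x + ry` are non-zerodivisors of `R`. -/
theorem rhoRing_isUnit_and_nonZeroDivisor_iff (R : Type*) [CommRing R] (r x y : R) :
    (IsUnit (Ideal.Quotient.mk _ (Polynomial.C x + Polynomial.C y * X) : RhoRing R r) ↔
      IsUnit x ∧ IsUnit (x + r * y)) ∧
    ((Ideal.Quotient.mk _ (Polynomial.C x + Polynomial.C y * X) : RhoRing R r)
        ∈ nonZeroDivisors (RhoRing R r) ↔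
      x ∈ nonZeroDivisors R ∧ x + r * y ∈ nonZeroDivisors R) :=
  ⟨RhoRing.isUnit_mk_iff, RhoRing.mk_mem_nonZeroDivisors_iff⟩
end

section
/- Let p be a prime number. Then Int(ℤ; pℤ) = ℤ[X] + p·Int(ℤ); that is, a polynomial f ∈ ℚ[X] with f(ℤ) ⊆ ℤ preserves congruences modulo p (i.e., a ≡ b (mod p) implies f(a) ≡ f(b) (mod p) for all a, b ∈ ℤ) if and only if f = g + p·h for some g ∈ ℤ[X] and some h ∈ ℚ[X] with h(ℤ) ⊆ ℤ. -/
open Polynomial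

/-- For a prime `p`, `Int(ℤ; pℤ) = ℤ[X] + p·Int(ℤ)`: an integer-valued
polynomial `f ∈ ℚ[X]` preserves congruences modulo `p` if and only if `f = g + p·h` with
`g ∈ ℤ[X]` and `h` integer-valued. -/
theorem intPoly_int_mod_prime (p : ℕ) (hp : p.Prime) (f : Polynomial ℚ)
    (hf : ∀ a : ℤ, ∃ c : ℤ, f.eval (a : ℚ) = (c : ℚ)) :
    (∀ a b : ℤ, (p : ℤ) ∣ a - b → ∃ c : ℤ, f.eval (a : ℚ) - f.eval (b : ℚ) = ((p * c : ℤ) : ℚ))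
      ↔ ∃ (g : Polynomial ℤ) (h : Polynomial ℚ),
          (∀ a : ℤ, ∃ c : ℤ, h.eval (a : ℚ) = (c : ℚ)) ∧
          f = g.map (Int.castRingHom ℚ) + (p : ℚ) • h := by
  haveI : Fact p.Prime := ⟨hp⟩
  have hp0 : (p : ℚ) ≠ 0 := by exact_mod_cast hp.ne_zero
  constructor
  · intro H
    -- value function
    set v : ℤ → ℤ := fun a => (hf a).choose with hv
    have hvspec : ∀ a : ℤ, f.eval (a : ℚ) = (v a : ℚ) := fun a => (hf a).choose_spec
    have Hdvd : ∀ a b : ℤ, (p : ℤ) ∣ a - b → (p : ℤ) ∣ v a - v b := by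
      intro a b hab
      obtain ⟨c, hc⟩ := H a b hab
      refine ⟨c, ?_⟩
      have : ((v a - v b : ℤ) : ℚ) = ((p * c : ℤ) : ℚ) := by
        push_cast
        rw [← hvspec a, ← hvspec b]; push_cast at hc ⊢; linarith
      exact_mod_cast this
    -- the induced function on ZMod p
    set F : ZMod p → ZMod p := fun x => ((v (x.val : ℤ) : ℤ) : ZMod p) with hF
    -- F agrees with v mod p
    have hFv : ∀ a : ℤ, F (a : ZMod p) = ((v a : ℤ) : ZMod p) := by
      intro a
      have h1 : (p : ℤ) ∣ (((a : ZMod p).val : ℤ) - a) := by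
        have : ((((a : ZMod p).val : ℤ) - a : ℤ) : ZMod p) = 0 := by
          push_cast [ZMod.natCast_val, ZMod.intCast_cast, ZMod.intCast_zmod_cast]
          simp [ZMod.intCast_cast]
        exact (ZMod.intCast_zmod_eq_zero_iff_dvd _ p).mp this
      have h2 := Hdvd _ _ h1
      have : ((v ((a : ZMod p).val : ℤ) - v a : ℤ) : ZMod p) = 0 :=
        (ZMod.intCast_zmod_eq_zero_iff_dvd _ p).mpr h2
      push_cast at this
      simpa [hF, sub_eq_zero] using this
    -- interpolate F by a polynomial over ZMod p
    set G : Polynomial (ZMod p) := Lagrange.interpolate Finset.univ id F with hG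
    have hGeval : ∀ x : ZMod p, G.eval x = F x := fun x =>
      Lagrange.eval_interpolate_at_node F (Set.injOn_id _) (Finset.mem_univ x)
    -- lift G to ℤ[X]
    set g : Polynomial ℤ := G.sum fun n c => Polynomial.C (c.val : ℤ) * Polynomial.X ^ n with hg
    have hgmap : g.map (Int.castRingHom (ZMod p)) = G := by
      rw [hg, Polynomial.sum]
      rw [Polynomial.map_sum]
      conv_rhs => rw [G.as_sum_support]
      refine Finset.sum_congr rfl fun n _ => ?_
      rw [Polynomial.map_mul, Polynomial.map_pow, Polynomial.map_C, Polynomial.map_X]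
      simp only [eq_intCast, Int.cast_natCast, ZMod.natCast_val, ZMod.cast_id, ZMod.intCast_zmod_cast]
      rw [Polynomial.C_mul_X_pow_eq_monomial]
    -- key congruence: p ∣ v a - g.eval a
    have hkey : ∀ a : ℤ, (p : ℤ) ∣ v a - g.eval a := by
      intro a
      rw [← ZMod.intCast_zmod_eq_zero_iff_dvd]
      push_cast
      have : ((g.eval a : ℤ) : ZMod p) = G.eval ((a : ℤ) : ZMod p) := by
        rw [← hgmap, Polynomial.eval_intCast_map]
        simp
      rw [this, hGeval, hFv, sub_self]
    -- define h
    refine ⟨g, (p : ℚ)⁻¹ • (f - g.map (Int.castRingHom ℚ)), ?_, ?_⟩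
    · intro a
      obtain ⟨c, hc⟩ := hkey a
      refine ⟨c, ?_⟩
      have hge : (g.map (Int.castRingHom ℚ)).eval (a : ℚ) = ((g.eval a : ℤ) : ℚ) := by
        simpa using Polynomial.eval_intCast_map (Int.castRingHom ℚ) g a
      rw [Polynomial.eval_smul, Polynomial.eval_sub, hge, hvspec a, smul_eq_mul]
      have : (v a : ℚ) - ((g.eval a : ℤ) : ℚ) = (p : ℚ) * c := by exact_mod_cast hc
      rw [this]
      field_simp
    · rw [smul_smul, mul_inv_cancel₀ hp0, one_smul]
      ring
  · rintro ⟨g, h, hh, rfl⟩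
    intro a b hab
    obtain ⟨k, hk⟩ := hab.trans (Polynomial.sub_dvd_eval_sub a b g)
    obtain ⟨c1, hc1⟩ := hh a
    obtain ⟨c2, hc2⟩ := hh b
    refine ⟨k + (c1 - c2), ?_⟩
    have hga : (g.map (Int.castRingHom ℚ)).eval (a : ℚ) = ((g.eval a : ℤ) : ℚ) := by
      simpa using Polynomial.eval_intCast_map (Int.castRingHom ℚ) g a
    have hgb : (g.map (Int.castRingHom ℚ)).eval (b : ℚ) = ((g.eval b : ℤ) : ℚ) := by
      simpa using Polynomial.eval_intCast_map (Int.castRingHom ℚ) g b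
    simp only [Polynomial.eval_add, Polynomial.eval_smul, hga, hgb, hc1, hc2, smul_eq_mul]
    have : ((g.eval a : ℤ) : ℚ) - ((g.eval b : ℤ) : ℚ) = ((p : ℤ) : ℚ) * (k : ℚ) := by
      exact_mod_cast congrArg (fun x : ℤ => (x : ℚ)) hk
    push_cast at this ⊢
    linarith
end

section
/- Let R be a commutative ring and M an R-module, and let R(+)M denote the idealization of M over R. An element (x, m) ∈ R(+)M is a non-zerodivisor of R(+)M if and only if x is a non-zerodivisor on M and Ann_R(x) ∩ Ann_R(m) = (0). Moreover, (x, m) is a unit of R(+)M if and only if x is a unit of R. -/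
/-!
Write `z = (x, m)`. Testing `z` against `(0, n)` and `(a, 0)` gives the two conditions, since
`z (0, n) = (0, x n)` and `z (a, 0) = (a x, a m)`. Conversely, if `z (a, n) = (a x, x n + a m) = 0`,
then multiplying the second component by `x` kills `a m` (as `x a = 0`), so `x (x n) = 0`; regularity
of `x` on `M` gives `x n = 0`, hence `a m = 0`, hence `a = 0` and `n = 0`.
If `x` is a unit, `(x, m)` has inverse `(x⁻¹, -x⁻² m)`.
-/

open TrivSqZeroExt

namespace TrivSqZeroExt

theorem mul_inr {R M : Type*} [Semiring R] [AddCommMonoid M] [Module R M] [Module Rᵐᵒᵖ M]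
    (z : TrivSqZeroExt R M) (n : M) : z * inr n = inr (z.fst • n) :=
  ext (mul_zero _) (by simp)

variable {R M : Type*} [CommSemiring R] [AddCommMonoid M] [Module R M] [Module Rᵐᵒᵖ M]
  [IsCentralScalar R M]

theorem right_eq_zero_of_mul_eq_zero {y z : TrivSqZeroExt R M} (hx : ∀ n : M, z.fst • n = 0 → n = 0)
    (hann : ∀ a : R, a * z.fst = 0 → a • z.snd = 0 → a = 0) (h : z * y = 0) : y = 0 := by
  have hfst : y.fst * z.fst = 0 := by simpa [mul_comm] using congrArg fst h
  have hsnd : z.fst • y.snd + y.fst • z.snd = 0 := by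
    simpa [op_smul_eq_smul] using congrArg snd h
  have hxxn : z.fst • z.fst • y.snd = 0 := by
    calc z.fst • z.fst • y.snd = z.fst • (z.fst • y.snd + y.fst • z.snd) := by
          rw [smul_add, smul_smul z.fst y.fst, mul_comm, hfst, zero_smul, add_zero]
      _ = 0 := by rw [hsnd, smul_zero]
  have hxn : z.fst • y.snd = 0 := hx _ hxxn
  have ham : y.fst • z.snd = 0 := by rwa [hxn, zero_add] at hsnd
  exact ext (hann _ hfst ham) (hx _ hxn)

theorem mem_nonZeroDivisors_iff {z : TrivSqZeroExt R M} :
    z ∈ nonZeroDivisors (TrivSqZeroExt R M) ↔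
      (∀ n : M, z.fst • n = 0 → n = 0) ∧ ∀ a : R, a * z.fst = 0 → a • z.snd = 0 → a = 0 := by
  refine ⟨fun hz => ⟨fun n hn => ?_, fun a hax ham => ?_⟩,
    fun ⟨hx, hann⟩ => mem_nonZeroDivisors_iff_left.2 fun _ => right_eq_zero_of_mul_eq_zero hx hann⟩
  · have hinr : inr n = 0 := mem_nonZeroDivisors_iff_left.1 hz _ (by rw [mul_inr, hn, inr_zero])
    exact congrArg snd hinr
  · have hinl : inl a = 0 := mem_nonZeroDivisors_iff_left.1 hz _
      (by rw [mul_inl_eq_op_smul, op_smul_eq_smul]; exact ext hax ham)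
    exact congrArg fst hinl

end TrivSqZeroExt

/-- In the idealization `R(+)M`, an element `(x, m)` is a
non-zerodivisor iff `x` is a non-zerodivisor on `M` and `Ann_R(x) ∩ Ann_R(m) = (0)`;
and `(x, m)` is a unit iff `x` is a unit of `R`. -/
theorem idealization_nonZeroDivisor_and_isUnit_iff (R M : Type*) [CommRing R]
    [AddCommGroup M] [Module R M] [Module Rᵐᵒᵖ M] [IsCentralScalar R M] (x : R) (m : M) :
    ((inl x + inr m : TrivSqZeroExt R M) ∈ nonZeroDivisors (TrivSqZeroExt R M) ↔
      ((∀ m' : M, x • m' = 0 → m' = 0) ∧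
        ∀ a : R, a * x = 0 → a • m = 0 → a = 0)) ∧
    (IsUnit (inl x + inr m : TrivSqZeroExt R M) ↔ IsUnit x) := by
  have hfst : (inl x + inr m : TrivSqZeroExt R M).fst = x := by simp
  have hsnd : (inl x + inr m : TrivSqZeroExt R M).snd = m := by simp
  rw [TrivSqZeroExt.mem_nonZeroDivisors_iff, isUnit_iff_isUnit_fst, hfst, hsnd]
  exact ⟨.rfl, .rfl⟩
end

section
/- Let R be a commutative ring and M an R-module such that every non-zerodivisor on M is a non-zerodivisor of R, and let U be the multiplicative set of all non-zerodivisors on M. Then the canonical ring homomorphism R(+)M → (U⁻¹R)(+)(U⁻¹M) exhibits (U⁻¹R)(+)(U⁻¹M) as the total quotient ring of R(+)M; that is, (U⁻¹R)(+)(U⁻¹M) is the localization of R(+)M at the multiplicative set of its non-zerodivisors. Moreover, under this hypothesis, (x, m) ∈ R(+)M is a non-zerodivisor of R(+)M if and only if x ∈ U, and (x, m) is a unit of R(+)M if and only if x is a unit of R. -/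
/-!
Write `U` for the elements of `R` that are regular on `M`. Multiplying `(x, m)` by `(0, n)` gives
`(0, x n)`, so a non-zerodivisor `(x, m)` of `R(+)M` has `x ∈ U`; conversely, if `x` is regular on
both `R` and `M` then `(x, m)` is a non-zerodivisor. By hypothesis `U` consists of
non-zerodivisors of `R`, so the non-zerodivisors of `R(+)M` are exactly the `(x, m)` with `x ∈ U`.
Their images in `(U⁻¹R)(+)(U⁻¹M)` are units, the map is injective since `U` is regular on `R` and
on `M`, and every element `(r/s, m/t)` of the target is an image divided by the image of
`(st, 0)`.
-/

open TrivSqZeroExt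

/-- The multiplicative set `U` of all non-zerodivisors on the module `M`. -/
def regOnSubmonoid (R M : Type*) [CommRing R] [AddCommGroup M] [Module R M] :
    Submonoid R where
  carrier := {a : R | ∀ m : M, a • m = 0 → m = 0}
  one_mem' := fun m hm => by simpa using hm
  mul_mem' := by
    intro a b ha hb m hm
    rw [mul_smul] at hm
    exact hb m (ha _ hm)

section

variable (R M : Type*) [CommRing R] [AddCommGroup M] [Module R M]

/-- The right-module structure on `U⁻¹M` over `(U⁻¹R)ᵐᵒᵖ` given by commutativity. -/
noncomputable local instance locMopModule :
    Module (Localization (regOnSubmonoid R M))ᵐᵒᵖ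
      (LocalizedModule (regOnSubmonoid R M) M) :=
  Module.compHom _ ((RingHom.id (Localization (regOnSubmonoid R M))).fromOpposite mul_comm)

local instance locCentral :
    IsCentralScalar (Localization (regOnSubmonoid R M))
      (LocalizedModule (regOnSubmonoid R M) M) :=
  ⟨fun _ _ => rfl⟩

namespace TrivSqZeroExt

variable {R S M N : Type*} [CommSemiring R] [CommSemiring S] [AddCommMonoid M]
  [AddCommMonoid N] [Module R M] [Module Rᵐᵒᵖ M] [IsCentralScalar R M] [Module S N]
  [Module Sᵐᵒᵖ N] [IsCentralScalar S N]

def mapRingHom (f : R →+* S) (g : M →ₛₗ[f] N) : TrivSqZeroExt R M →+* TrivSqZeroExt S N where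
  toFun z := inl (f z.fst) + inr (g z.snd)
  map_one' := by ext <;> simp
  map_mul' x y := by ext <;> simp [add_comm]
  map_zero' := by ext <;> simp
  map_add' x y := by ext <;> simp

variable (f : R →+* S) (g : M →ₛₗ[f] N)

@[simp]
theorem fst_mapRingHom (z : TrivSqZeroExt R M) : (mapRingHom f g z).fst = f z.fst := by
  simp [mapRingHom]

@[simp]
theorem snd_mapRingHom (z : TrivSqZeroExt R M) : (mapRingHom f g z).snd = g z.snd := by
  simp [mapRingHom]

theorem mapRingHom_injective (hf : Function.Injective f) (hg : Function.Injective g) :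
    Function.Injective (mapRingHom f g) := fun _ _ h =>
  ext (hf (by simpa using congrArg fst h)) (hg (by simpa using congrArg snd h))

end TrivSqZeroExt

noncomputable def LocalizedModule.mkSemilinearMap {R : Type*} [CommSemiring R] (S : Submonoid R)
    (M : Type*) [AddCommMonoid M] [Module R M] :
    M →ₛₗ[algebraMap R (Localization S)] LocalizedModule S M where
  toFun := LocalizedModule.mkLinearMap S M
  map_add' := map_add _
  map_smul' r m := by simp [algebraMap_smul]

section

variable {R M}
variable [Module Rᵐᵒᵖ M] [IsCentralScalar R M]

local notation "U" => regOnSubmonoid R M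

theorem fst_mem_regOnSubmonoid_of_mem_nonZeroDivisors {z : TrivSqZeroExt R M}
    (hz : z ∈ nonZeroDivisors (TrivSqZeroExt R M)) : z.fst ∈ U := by
  intro m hm
  have : inr m * z = 0 := by ext <;> simp [hm]
  simpa using congrArg snd (mem_nonZeroDivisors_iff_right.mp hz _ this)

theorem mem_nonZeroDivisors_of_fst_mem {z : TrivSqZeroExt R M}
    (hR : z.fst ∈ nonZeroDivisors R) (hM : z.fst ∈ U) :
    z ∈ nonZeroDivisors (TrivSqZeroExt R M) := by
  refine mem_nonZeroDivisors_iff_right.mpr fun y hy => ?_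
  have hfst : y.fst = 0 := mem_nonZeroDivisors_iff_right.mp hR _ (by simpa using congrArg fst hy)
  have hsnd : z.fst • y.snd = 0 := by simpa [hfst] using congrArg snd hy
  exact ext hfst (hM _ hsnd)

theorem mem_nonZeroDivisors_iff_fst_mem_regOnSubmonoid (hU : U ≤ nonZeroDivisors R)
    {z : TrivSqZeroExt R M} : z ∈ nonZeroDivisors (TrivSqZeroExt R M) ↔ z.fst ∈ U :=
  ⟨fst_mem_regOnSubmonoid_of_mem_nonZeroDivisors, fun h => mem_nonZeroDivisors_of_fst_mem (hU h) h⟩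

noncomputable def idealizationToLocalization :
    TrivSqZeroExt R M →+* TrivSqZeroExt (Localization U) (LocalizedModule U M) :=
  TrivSqZeroExt.mapRingHom _ (LocalizedModule.mkSemilinearMap U M)

@[simp]
theorem fst_idealizationToLocalization (z : TrivSqZeroExt R M) :
    (idealizationToLocalization z).fst = algebraMap R (Localization U) z.fst :=
  TrivSqZeroExt.fst_mapRingHom _ _ z

@[simp]
theorem snd_idealizationToLocalization (z : TrivSqZeroExt R M) :
    (idealizationToLocalization z).snd = LocalizedModule.mkLinearMap U M z.snd :=
  TrivSqZeroExt.snd_mapRingHom _ _ z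

theorem idealizationToLocalization_injective (hU : U ≤ nonZeroDivisors R) :
    Function.Injective (idealizationToLocalization (R := R) (M := M)) :=
  TrivSqZeroExt.mapRingHom_injective _ _ (IsLocalization.injective _ hU)
    ((IsLocalizedModule.injective_iff_isRegular U _).mpr fun c =>
      isSMulRegular_iff_right_eq_zero_of_smul.mpr c.2)

theorem isUnit_idealizationToLocalization {z : TrivSqZeroExt R M}
    (hz : z ∈ nonZeroDivisors (TrivSqZeroExt R M)) : IsUnit (idealizationToLocalization z) := by
  rw [isUnit_iff_isUnit_fst, fst_idealizationToLocalization]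
  exact IsLocalization.map_units _ (⟨_, fst_mem_regOnSubmonoid_of_mem_nonZeroDivisors hz⟩ : U)

theorem exists_mul_idealizationToLocalization_inl_eq
    (w : TrivSqZeroExt (Localization U) (LocalizedModule U M)) :
    ∃ z : TrivSqZeroExt R M, ∃ s ∈ U,
      w * idealizationToLocalization (inl s) = idealizationToLocalization z := by
  obtain ⟨⟨r, s⟩, hrs⟩ := IsLocalization.surj U w.fst
  obtain ⟨⟨m, t⟩, hmt : t • w.snd = _⟩ :=
    IsLocalizedModule.surj U (LocalizedModule.mkLinearMap U M) w.snd
  refine ⟨inl (r * t) + inr (s • m), s * t, mul_mem s.2 t.2, ?_⟩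
  ext
  · simp [← hrs, mul_assoc]
  · simp only [snd_mul, snd_idealizationToLocalization, fst_idealizationToLocalization, fst_inl,
      snd_inl, snd_add, snd_inr, map_zero, smul_zero, zero_add, op_smul_eq_smul,
      algebraMap_smul, map_smul, ← hmt, mul_smul, Submonoid.smul_def]

end

/-- Suppose every non-zerodivisor on `M` is a non-zerodivisor of `R`,
and let `U` be the multiplicative set of non-zerodivisors on `M`.  Then the canonical map
`R(+)M → (U⁻¹R)(+)(U⁻¹M)` exhibits `(U⁻¹R)(+)(U⁻¹M)` as the total quotient ring of the
idealization `R(+)M`; moreover `(x, m)` is a non-zerodivisor of `R(+)M` iff `x ∈ U`, and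
`(x, m)` is a unit of `R(+)M` iff `x` is a unit of `R`. -/
theorem idealization_totalQuotientRing [Module Rᵐᵒᵖ M] [IsCentralScalar R M]
    (hU : ∀ a : R, (∀ m : M, a • m = 0 → m = 0) → a ∈ nonZeroDivisors R) :
    (∃ φ : TrivSqZeroExt R M →+*
        TrivSqZeroExt (Localization (regOnSubmonoid R M))
          (LocalizedModule (regOnSubmonoid R M) M),
      (∀ (x : R) (m : M),
        φ (inl x + inr m) =
          inl (algebraMap R (Localization (regOnSubmonoid R M)) x) +
            inr (LocalizedModule.mkLinearMap (regOnSubmonoid R M) M m)) ∧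
      Function.Injective φ ∧
      (∀ z ∈ nonZeroDivisors (TrivSqZeroExt R M), IsUnit (φ z)) ∧
      (∀ w : TrivSqZeroExt (Localization (regOnSubmonoid R M))
          (LocalizedModule (regOnSubmonoid R M) M),
        ∃ z : TrivSqZeroExt R M, ∃ u ∈ nonZeroDivisors (TrivSqZeroExt R M),
          w * φ u = φ z)) ∧
    (∀ (x : R) (m : M),
      ((inl x + inr m : TrivSqZeroExt R M) ∈ nonZeroDivisors (TrivSqZeroExt R M) ↔
        x ∈ regOnSubmonoid R M)) ∧
    (∀ (x : R) (m : M),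
      (IsUnit (inl x + inr m : TrivSqZeroExt R M) ↔ IsUnit x)) := by
  have hU' : regOnSubmonoid R M ≤ nonZeroDivisors R := hU
  have hnzd (x : R) (m : M) : (inl x + inr m : TrivSqZeroExt R M) ∈
      nonZeroDivisors (TrivSqZeroExt R M) ↔ x ∈ regOnSubmonoid R M := by
    rw [mem_nonZeroDivisors_iff_fst_mem_regOnSubmonoid hU', fst_add, fst_inl, fst_inr, add_zero]
  refine ⟨⟨idealizationToLocalization, fun x m => by ext <;> simp,
    idealizationToLocalization_injective hU', fun _ => isUnit_idealizationToLocalization,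
    fun w => ?_⟩, hnzd, fun x m => by simp [isUnit_iff_isUnit_fst]⟩
  obtain ⟨z, s, hs, h⟩ := exists_mul_idealizationToLocalization_inl_eq w
  exact ⟨z, inl s, (mem_nonZeroDivisors_iff_fst_mem_regOnSubmonoid hU').mpr hs, h⟩

end
end

section
/- Let R be a commutative ring and M an R-module, let U be the multiplicative set of non-zerodivisors on M, let T(M) = U⁻¹M, and identify M with its image in T(M). Then Int(R, M) = M[X] (i.e., every polynomial h with coefficients in T(M) satisfying h(r) ∈ M for all r ∈ R has all its coefficients in M) if and only if the R-module T(M)/M is without polynomial torsion, i.e., the only polynomial g with coefficients in T(M)/M satisfying g(r) = 0 for all r ∈ R is g = 0. -/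
namespace PolynomialModule

variable {R M M' : Type*} [CommRing R] [AddCommGroup M] [Module R M]
  [AddCommGroup M'] [Module R M']

theorem eval_map_self (f : M →ₗ[R] M') (q : PolynomialModule R M) (r : R) :
    eval r (map R f q) = f (eval r q) :=
  eval_map R f q r

theorem coeff_map (f : M →ₗ[R] M') (q : PolynomialModule R M) (n : ℕ) :
    (map R f q).coeff n = f (q.coeff n) :=
  rfl

theorem map_surjective {f : M →ₗ[R] M'} (hf : Function.Surjective f) :
    Function.Surjective (map R f) := by
  intro g
  obtain ⟨q, hq⟩ := Finsupp.mapRange_surjective f (map_zero f) hf g.coeff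
  exact ⟨ofCoeff R q, coeff_injective hq⟩

theorem map_mkQ_eq_zero_iff (N : Submodule R M) (q : PolynomialModule R M) :
    map R N.mkQ q = 0 ↔ ∀ n, q.coeff n ∈ N := by
  simp only [← coeff_eq_zero, Finsupp.ext_iff, coeff_map, Submodule.mkQ_apply,
    Submodule.Quotient.mk_eq_zero, Finsupp.coe_zero, Pi.zero_apply]

theorem forall_coeff_mem_of_forall_eval_mem_iff (N : Submodule R M) :
    (∀ h : PolynomialModule R M, (∀ r : R, eval r h ∈ N) → ∀ j, h.coeff j ∈ N) ↔
      ∀ g : PolynomialModule R (M ⧸ N), (∀ r : R, eval r g = 0) → g = 0 := by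
  have eval_mem_iff (h : PolynomialModule R M) (r : R) :
      eval r (map R N.mkQ h) = 0 ↔ eval r h ∈ N := by
    rw [eval_map_self, Submodule.mkQ_apply, Submodule.Quotient.mk_eq_zero]
  constructor
  · intro H g hg
    obtain ⟨h, rfl⟩ := map_surjective N.mkQ_surjective g
    exact (map_mkQ_eq_zero_iff N h).2 <| H h fun r => (eval_mem_iff h r).1 (hg r)
  · intro H h hh
    exact (map_mkQ_eq_zero_iff N h).1 <| H _ fun r => (eval_mem_iff h r).2 (hh r)

end PolynomialModule

/-- Let `U = M^reg` and `T(M) = U⁻¹M`.  Then `Int(R, M) = M[X]` (every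
polynomial with coefficients in `T(M)` taking values in `M` on `R` has all its
coefficients in `M`) if and only if the `R`-module `T(M)/M` is without polynomial
torsion (the only polynomial with coefficients in `T(M)/M` vanishing identically on `R`
is the zero polynomial). -/
theorem intPoly_module_eq_iff_no_polynomial_torsion (R M : Type*) [CommRing R]
    [AddCommGroup M] [Module R M] :
    (∀ h : PolynomialModule R (LocalizedModule (regOnSubmonoid R M) M),
        (∀ r : R,
          PolynomialModule.eval r h
            ∈ Set.range ⇑(LocalizedModule.mkLinearMap (regOnSubmonoid R M) M)) →
        ∀ j : ℕ, h.coeff j ∈ Set.range ⇑(LocalizedModule.mkLinearMap (regOnSubmonoid R M) M))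
      ↔ (∀ g : PolynomialModule R
            (LocalizedModule (regOnSubmonoid R M) M ⧸
              LinearMap.range (LocalizedModule.mkLinearMap (regOnSubmonoid R M) M)),
          (∀ r : R, PolynomialModule.eval r g = 0) → g = 0) :=
  PolynomialModule.forall_coeff_mem_of_forall_eval_mem_iff
    (LinearMap.range (LocalizedModule.mkLinearMap (regOnSubmonoid R M) M))
end
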